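/- arXiv:2312.14778 — 4 statements merged into one kernel-verified Lean document; each statement's English description precedes it below -/
import Mathlib

section
/- For any natural number n ≥ 1, the least common multiple of all binomial coefficients C(i, j) with 0 ≤ j ≤ i ≤ n equals the least common multiple of the integers 1, 2, ..., n. -/
/-!
Every prime power dividing `C(i, j)` is at most `i` (Kummer), so `C(i, j)` divides
`lcm {1, …, i}`; conversely each `1 ≤ k ≤ n` occurs in the table as `C(k, 1)`.
-/

open Finset Nat

lemma Nat.lcmUpto_dvd_lcmUpto {m n : ℕ} (h : m ≤ n) : lcmUpto m ∣ lcmUpto n :=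
  lcm_mono (Icc_subset_Icc_right h)

lemma Nat.lcm_choose_dvd_lcmUpto (n : ℕ) :
    (range (n + 1)).lcm (n.choose ·) ∣ lcmUpto n :=
  Finset.lcm_dvd fun _ hk => Chebyshev.choose_dvd_lcmUpto (Nat.lt_succ_iff.mp (mem_range.mp hk))

lemma Nat.self_dvd_lcm_choose {n : ℕ} (hn : 0 < n) :
    n ∣ (range (n + 1)).lcm (n.choose ·) := by
  simpa using dvd_lcm (f := (n.choose ·)) (mem_range.mpr (Nat.succ_lt_succ hn))

theorem lcm_binomials_eq_lcm_range_general (n : ℕ) :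
    (Finset.range (n + 1)).lcm (fun i => (Finset.range (i + 1)).lcm (fun j => i.choose j))
      = (Finset.Icc 1 n).lcm id := by
  apply Nat.dvd_antisymm
  · refine Finset.lcm_dvd fun i hi => ?_
    exact (lcm_choose_dvd_lcmUpto i).trans
      (lcmUpto_dvd_lcmUpto (Nat.lt_succ_iff.mp (mem_range.mp hi)))
  · refine Finset.lcm_dvd fun k hk => ?_
    obtain ⟨hk₁, hkn⟩ := mem_Icc.mp hk
    exact (self_dvd_lcm_choose hk₁).trans <|
      dvd_lcm (f := fun i => (range (i + 1)).lcm (i.choose ·)) (mem_range.mpr (lt_succ_of_le hkn))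

/-- For `n ≥ 1`, the lcm of all binomial coefficients `C(i,j)` with `0 ≤ j ≤ i ≤ n`
equals `lcm {1, …, n}`. -/
theorem lcm_binomials_eq_lcm_range (n : ℕ) (hn : 1 ≤ n) :
    (Finset.range (n + 1)).lcm (fun i => (Finset.range (i + 1)).lcm (fun j => i.choose j))
      = (Finset.Icc 1 n).lcm id :=
  lcm_binomials_eq_lcm_range_general n
end

section
/- For natural numbers s ≥ 2, i with 1 ≤ i ≤ s, the following polynomial identity holds in Q[k]: 1 = (Σ_{j=0}^{s-i-1} (-1)^{s-j} ((s-i-j)!/(s-j-1)!) C(k,j) C(k-j-1, s-i-j-1)) · (k-s+1)^{rising (i-1)} + (Σ_{j=s-i+1}^{s-1} (-1)^{s-j-1} ((i+j-s)!/j!) C(k-j-1, s-j-1) C(k-s+i-1, i+j-s-1)) · k^{falling (s-i)}, where x^{rising n} = x(x+1)···(x+n-1) and x^{falling n} = x(x-1)···(x-n+1), and C(x, m) = x^{falling m}/m! denotes the generalized binomial coefficient polynomial. -/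
open Polynomial Finset

/-- Rising factorial `p(p+1)⋯(p+n-1)` of a polynomial. -/
noncomputable def risingP (p : Polynomial ℚ) (n : ℕ) : Polynomial ℚ :=
  ∏ i ∈ Finset.range n, (p + Polynomial.C (i : ℚ))

/-- Falling factorial `p(p-1)⋯(p-n+1)` of a polynomial. -/
noncomputable def fallingP (p : Polynomial ℚ) (n : ℕ) : Polynomial ℚ :=
  ∏ i ∈ Finset.range n, (p - Polynomial.C (i : ℚ))

/-- Generalized binomial coefficient polynomial `C(p, m) = p^{falling m} / m!`. -/
noncomputable def chooseP (p : Polynomial ℚ) (m : ℕ) : Polynomial ℚ :=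
  Polynomial.C ((m.factorial : ℚ)⁻¹) * fallingP p m

/-! The right-hand side has degree at most `s - 2`, so it suffices to check that it equals `1` at
the `s - 1` points `t ∈ {0, …, s - 1} \ {s - i}`. For `t < s - i` the falling factorial
`k^{falling (s-i)}` vanishes at `t`, and in the first sum only the term `j = t` survives, since
`C(t, j) = 0` for `j > t` and `C(t - j - 1, s - i - j - 1) = 0` for `j < t`. For `t > s - i` the
rising factorial vanishes instead and only `j = t` survives in the second sum. In both cases the
surviving product is `±1` times a ratio of factorials that cancels. -/

section Pochhammer

variable (p : ℚ[X]) (n : ℕ)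

theorem fallingP_eq_comp : fallingP p n = (descPochhammer ℚ n).comp p := by
  induction n with
  | zero => simp [fallingP]
  | succ n ih =>
    rw [fallingP, prod_range_succ, ← fallingP, ih, descPochhammer_succ_right, mul_comp,
      sub_comp, X_comp, natCast_comp, C_eq_natCast]

theorem risingP_eq_comp : risingP p n = (ascPochhammer ℚ n).comp p := by
  induction n with
  | zero => simp [risingP]
  | succ n ih =>
    rw [risingP, prod_range_succ, ← risingP, ih, ascPochhammer_succ_right, mul_comp,
      add_comp, X_comp, natCast_comp, C_eq_natCast]

theorem eval_chooseP (x : ℚ) : (chooseP p n).eval x = Ring.choose (p.eval x) n := by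
  rw [chooseP, eval_mul, eval_C, fallingP_eq_comp, eval_comp, Ring.choose_eq_smul, smul_eq_mul,
    ← descPochhammer_map (algebraMap ℤ ℚ), eval_map_algebraMap, aeval_eq_smeval]

variable {p}

theorem natDegree_fallingP_le (hp : p.natDegree ≤ 1) : (fallingP p n).natDegree ≤ n := by
  rw [fallingP_eq_comp]
  exact natDegree_comp_le.trans <| by
    simpa [descPochhammer_natDegree] using Nat.mul_le_mul_left n hp

theorem natDegree_risingP_le (hp : p.natDegree ≤ 1) : (risingP p n).natDegree ≤ n := by
  rw [risingP_eq_comp]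
  exact natDegree_comp_le.trans <| by
    simpa [ascPochhammer_natDegree] using Nat.mul_le_mul_left n hp

theorem natDegree_chooseP_le (hp : p.natDegree ≤ 1) : (chooseP p n).natDegree ≤ n :=
  (natDegree_C_mul_le _ _).trans (natDegree_fallingP_le n hp)

end Pochhammer

theorem Ring.choose_neg_one {R : Type*} [Ring R] [BinomialRing R] (n : ℕ) :
    Ring.choose (-1 : R) n = (-1) ^ n := by
  rw [Ring.choose_neg, add_sub_cancel_left, Ring.choose_natCast, Nat.choose_self, Nat.cast_one,
    Int.negOnePow_def, Units.smul_def]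
  simp

theorem Ring.choose_natCast_sub_natCast_eq_zero {R : Type*} [Ring R] [BinomialRing R]
    {t a n : ℕ} (ha : a ≤ t) (h : t < a + n) : Ring.choose ((t : R) - a) n = 0 := by
  rw [← Nat.cast_sub ha, Ring.choose_natCast, Nat.choose_eq_zero_of_lt (by omega), Nat.cast_zero]

theorem eval_fallingP_X_natCast (t n : ℕ) :
    (fallingP X n).eval (t : ℚ) = t.descFactorial n := by
  rw [fallingP_eq_comp, comp_X, descPochhammer_eval_eq_descFactorial]

theorem eval_risingP_X_sub_natCast {a t : ℕ} (h : t ≤ a) (n : ℕ) :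
    (risingP (X - C (a : ℚ)) n).eval (t : ℚ) = (-1) ^ n * (a - t).descFactorial n := by
  rw [risingP_eq_comp, eval_comp, eval_sub, eval_X, eval_C, ← neg_sub, ← Nat.cast_sub h,
    ascPochhammer_eval_neg_eq_descPochhammer, descPochhammer_eval_eq_descFactorial]

noncomputable def cofactorRising (s i : ℕ) : ℚ[X] :=
  ∑ j ∈ range (s - i),
    C ((-1 : ℚ) ^ (s - j) * ((s - i - j).factorial : ℚ) / ((s - j - 1).factorial : ℚ))
      * chooseP X j
      * chooseP (X - C ((j : ℚ) + 1)) (s - i - j - 1)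

noncomputable def cofactorFalling (s i : ℕ) : ℚ[X] :=
  ∑ j ∈ Icc (s - i + 1) (s - 1),
    C ((-1 : ℚ) ^ (s - j - 1) * ((i + j - s).factorial : ℚ) / (j.factorial : ℚ))
      * chooseP (X - C ((j : ℚ) + 1)) (s - j - 1)
      * chooseP (X - C ((s : ℚ) - (i : ℚ) + 1)) (i + j - s - 1)

noncomputable def cetologyPoly (s i : ℕ) : ℚ[X] :=
  cofactorRising s i * risingP (X - C ((s : ℚ) - 1)) (i - 1)
    + cofactorFalling s i * fallingP X (s - i)

theorem natDegree_cetologyPoly_le {s i : ℕ} (hi : 1 ≤ i) (his : i ≤ s) :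
    (cetologyPoly s i).natDegree ≤ s - 2 := by
  refine natDegree_add_le_of_degree_le ?_ ?_
  · rw [cofactorRising, sum_mul]
    refine natDegree_sum_le_of_forall_le _ _ fun j hj => ?_
    have hj := mem_range.1 hj
    calc _ ≤ j + (s - i - j - 1) + (i - 1) :=
          natDegree_mul_le_of_le (natDegree_mul_le_of_le
            ((natDegree_C_mul_le _ _).trans (natDegree_chooseP_le j natDegree_X_le))
            (natDegree_chooseP_le _ (natDegree_X_sub_C_le _)))
            (natDegree_risingP_le _ (natDegree_X_sub_C_le _))
      _ ≤ s - 2 := by omega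
  · rw [cofactorFalling, sum_mul]
    refine natDegree_sum_le_of_forall_le _ _ fun j hj => ?_
    have hj := mem_Icc.1 hj
    calc _ ≤ (s - j - 1) + (i + j - s - 1) + (s - i) :=
          natDegree_mul_le_of_le (natDegree_mul_le_of_le
            ((natDegree_C_mul_le _ _).trans (natDegree_chooseP_le _ (natDegree_X_sub_C_le _)))
            (natDegree_chooseP_le _ (natDegree_X_sub_C_le _)))
            (natDegree_fallingP_le _ natDegree_X_le)
      _ ≤ s - 2 := by omega

theorem eval_cofactorRising_of_lt {s i t : ℕ} (ht : t < s - i) :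
    (cofactorRising s i).eval (t : ℚ) =
      (-1) ^ (s - t) * (s - i - t).factorial / (s - t - 1).factorial * (-1) ^ (s - i - t - 1) := by
  rw [cofactorRising, eval_finsetSum, sum_eq_single_of_mem t (mem_range.2 ht)]
  · simp [eval_chooseP, Ring.choose_natCast, Ring.choose_neg_one]
  · intro j _ hjt
    rcases hjt.lt_or_gt with hlt | hgt
    · have : Ring.choose ((t : ℚ) - (j + 1 : ℕ)) (s - i - j - 1) = 0 :=
        Ring.choose_natCast_sub_natCast_eq_zero (by omega) (by omega)
      simp_all [eval_chooseP]
    · simp [eval_chooseP, Ring.choose_natCast, Nat.choose_eq_zero_of_lt hgt]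

theorem eval_cofactorFalling_of_gt {s i t : ℕ} (his : i ≤ s) (hit : s - i < t) (hts : t < s) :
    (cofactorFalling s i).eval (t : ℚ) =
      (-1) ^ (s - t - 1) * (i + t - s).factorial / t.factorial * (-1) ^ (s - t - 1) := by
  rw [cofactorFalling, eval_finsetSum, sum_eq_single_of_mem t (mem_Icc.2 ⟨hit, by omega⟩)]
  · have : (t : ℚ) - ((s : ℚ) - i + 1) = (i + t - s - 1 : ℕ) := by
      rw [Nat.cast_sub (by omega), Nat.cast_sub (by omega)]; push_cast; ring
    simp [eval_chooseP, this, Ring.choose_natCast, Ring.choose_neg_one]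
  · intro j hj hjt
    have hj := mem_Icc.1 hj
    rcases hjt.lt_or_gt with hlt | hgt
    · have : Ring.choose ((t : ℚ) - (j + 1 : ℕ)) (s - j - 1) = 0 :=
        Ring.choose_natCast_sub_natCast_eq_zero (by omega) (by omega)
      simp_all [eval_chooseP]
    · have : Ring.choose ((t : ℚ) - (s - i + 1 : ℕ)) (i + j - s - 1) = 0 :=
        Ring.choose_natCast_sub_natCast_eq_zero (by omega) (by omega)
      simp_all [eval_chooseP, Nat.cast_sub his]

theorem eval_cetologyPoly_of_lt {s i t : ℕ} (hi : 1 ≤ i) (ht : t < s - i) :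
    (cetologyPoly s i).eval (t : ℚ) = 1 := by
  have hs : ((s - 1 : ℕ) : ℚ) = (s : ℚ) - 1 := by rw [Nat.cast_sub (by omega), Nat.cast_one]
  have hfac : ((s - i - t).factorial : ℚ) * (s - 1 - t).descFactorial (i - 1) =
      (s - t - 1).factorial := by
    rw [show s - i - t = (s - 1 - t) - (i - 1) by omega, show s - t - 1 = s - 1 - t by omega]
    exact_mod_cast Nat.factorial_mul_descFactorial (by omega)
  have hsign : (-1 : ℚ) ^ (s - t) * (-1) ^ (s - i - t - 1) * (-1) ^ (i - 1) = 1 := by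
    rw [← pow_add, ← pow_add, show s - t + (s - i - t - 1) + (i - 1) = 2 * (s - t - 1) by omega,
      pow_mul]
    norm_num
  rw [cetologyPoly, eval_add, eval_mul, eval_mul, eval_cofactorRising_of_lt ht, ← hs,
    eval_risingP_X_sub_natCast (by omega), eval_fallingP_X_natCast,
    Nat.descFactorial_eq_zero_iff_lt.2 ht, Nat.cast_zero, mul_zero, add_zero]
  field_simp
  linear_combination (s - t - 1).factorial * hsign
    + (-1 : ℚ) ^ (s - t) * (-1) ^ (s - i - t - 1) * (-1) ^ (i - 1) * hfac

theorem eval_cetologyPoly_of_gt {s i t : ℕ} (his : i ≤ s) (hit : s - i < t) (hts : t < s) :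
    (cetologyPoly s i).eval (t : ℚ) = 1 := by
  have hs : ((s - 1 : ℕ) : ℚ) = (s : ℚ) - 1 := by rw [Nat.cast_sub (by omega), Nat.cast_one]
  have hfac : (t.descFactorial (s - i) : ℚ) * (i + t - s).factorial = t.factorial := by
    rw [mul_comm, show i + t - s = t - (s - i) by omega]
    exact_mod_cast Nat.factorial_mul_descFactorial (by omega)
  have hsign : (-1 : ℚ) ^ (s - t - 1) * (-1) ^ (s - t - 1) = 1 := by
    rw [← mul_pow]; norm_num
  rw [cetologyPoly, eval_add, eval_mul, eval_mul, eval_cofactorFalling_of_gt his hit hts, ← hs,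
    eval_risingP_X_sub_natCast (by omega), eval_fallingP_X_natCast,
    Nat.descFactorial_eq_zero_iff_lt.2 (by omega : s - 1 - t < i - 1), Nat.cast_zero, mul_zero,
    mul_zero, zero_add]
  field_simp
  linear_combination (-1 : ℚ) ^ (s - t - 1) * (-1) ^ (s - t - 1) * hfac + t.factorial * hsign

/-- The univariate polynomial identity (in `k`) from the paper, equation (eq:cetology). -/
theorem cetology_identity (s i : ℕ) (hs : 2 ≤ s) (hi1 : 1 ≤ i) (his : i ≤ s) :
    (1 : Polynomial ℚ) =
      (∑ j ∈ Finset.range (s - i),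
          Polynomial.C ((-1 : ℚ) ^ (s - j) * ((s - i - j).factorial : ℚ)
              / ((s - j - 1).factorial : ℚ))
            * chooseP Polynomial.X j
            * chooseP (Polynomial.X - Polynomial.C ((j : ℚ) + 1)) (s - i - j - 1))
        * risingP (Polynomial.X - Polynomial.C ((s : ℚ) - 1)) (i - 1)
      + (∑ j ∈ Finset.Icc (s - i + 1) (s - 1),
          Polynomial.C ((-1 : ℚ) ^ (s - j - 1) * ((i + j - s).factorial : ℚ)
              / (j.factorial : ℚ))
            * chooseP (Polynomial.X - Polynomial.C ((j : ℚ) + 1)) (s - j - 1)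
            * chooseP (Polynomial.X - Polynomial.C ((s : ℚ) - (i : ℚ) + 1)) (i + j - s - 1))
        * fallingP Polynomial.X (s - i) := by
  change 1 = cetologyPoly s i
  refine eq_of_natDegree_lt_card_of_eval_eq' _ _ (((range s).erase (s - i)).image Nat.cast)
    (fun x hx => ?_) ?_
  · obtain ⟨t, ht, rfl⟩ := mem_image.1 hx
    obtain ⟨htne, hts⟩ := mem_erase.1 ht
    rw [eval_one]
    rcases htne.lt_or_gt with hlt | hgt
    · exact (eval_cetologyPoly_of_lt hi1 hlt).symm
    · exact (eval_cetologyPoly_of_gt his hgt (mem_range.1 hts)).symm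
  · rw [card_image_of_injective _ Nat.cast_injective, card_erase_of_mem (mem_range.2 (by omega)),
      card_range, natDegree_one]
    have := natDegree_cetologyPoly_le hi1 his
    omega
end

section
/- For natural numbers s ≥ 2, the following polynomial identity holds in Q[v,k]: 1 = Σ_{i=0}^{s-1} ( Σ_{j=i+1}^{s-1} ((-1)^{i+j} (j-i-1)!)/((s-i-1)!(j-1)!) · C(k-j-1, s-j-1) C(k-i-1, j-i-1) C(v-s, i) ) · (v-2s+1)^{rising (s-i-1)} (k-1)^{falling i} + Σ_{i=0}^{s-1} ( Σ_{j=1}^{i} ((-1)^{i+j} (i-j)!)/(i!(s-j-1)!) · C(k-j-1, i-j) C(k-1, j-1) C(v-s-i-1, s-i-1) ) · (v-s)^{falling i} (k-s+1)^{rising (s-i-1)}. -/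
open MvPolynomial Finset

/-- Rising factorial `x(x+1)⋯(x+n-1)` in a commutative ring. -/
noncomputable def risingF {R : Type*} [CommRing R] (x : R) (n : ℕ) : R :=
  ∏ i ∈ Finset.range n, (x + (i : R))

/-- Falling factorial `x(x-1)⋯(x-n+1)` in a commutative ring. -/
noncomputable def fallingF {R : Type*} [CommRing R] (x : R) (n : ℕ) : R :=
  ∏ i ∈ Finset.range n, (x - (i : R))

/-- Generalized binomial coefficient `C(x, m) = x^{falling m} / m!` in a `ℚ`-algebra. -/
noncomputable def chooseF {R : Type*} [CommRing R] [Algebra ℚ R] (x : R) (m : ℕ) : R :=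
  algebraMap ℚ R ((m.factorial : ℚ)⁻¹) * fallingF x m

/-!
Fix `s ≥ 2`. For fixed `v` the right-hand side is a polynomial of degree at most `s - 2` in `k`,
and for fixed `k` one of degree at most `s - 1` in `v`. At the integer points `v = s + m`
(`0 ≤ m < s`) and `k = t` (`1 ≤ t < s`) every summand vanishes except the one with
`(i, j) = (m, t)`, which lies in the first double sum if `m < t` and in the second if `t ≤ m`, and
equals `1`. Interpolating first in `k` and then in `v` gives the identity at every rational point,
hence in `ℚ[v, k]`.
-/

section Values

variable {R S F : Type*} [CommRing R] [CommRing S] [FunLike F R S]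

theorem map_fallingF [RingHomClass F R S] (φ : F) (x : R) (n : ℕ) :
    φ (fallingF x n) = fallingF (φ x) n := by
  simp [fallingF, map_prod]

theorem map_risingF [RingHomClass F R S] (φ : F) (x : R) (n : ℕ) :
    φ (risingF x n) = risingF (φ x) n := by
  simp [risingF, map_prod]

theorem fallingF_natCast (a n : ℕ) : fallingF (a : R) n = a.descFactorial n := by
  rw [fallingF, ← descPochhammer_eval_eq_prod_range, descPochhammer_eval_eq_descFactorial]

theorem risingF_neg (x : R) (n : ℕ) : risingF (-x) n = (-1) ^ n * fallingF x n := by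
  have : (-1 : R) ^ n = ∏ _i ∈ range n, (-1 : R) := by simp
  rw [risingF, fallingF, this, ← prod_mul_distrib]
  exact prod_congr rfl fun _ _ => by ring

theorem fallingF_neg_one (n : ℕ) : fallingF (-1 : R) n = (-1) ^ n * n.factorial := by
  have hrising : risingF (1 : R) n = n.factorial := by
    rw [risingF, ← prod_range_add_one_eq_factorial]
    push_cast
    exact prod_congr rfl fun _ _ => add_comm _ _
  rw [← hrising, ← neg_neg (1 : R), risingF_neg, ← mul_assoc, ← mul_pow]
  simp

theorem fallingF_eq_zero_of_eq_intCast {x : R} {n : ℕ} (a : ℤ) (hx : x = a) (h₀ : 0 ≤ a)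
    (h : a < n) : fallingF x n = 0 := by
  lift a to ℕ using h₀
  rw [hx, Int.cast_natCast, fallingF_natCast, Nat.descFactorial_eq_zero_iff_lt.2 (by omega),
    Nat.cast_zero]

theorem risingF_eq_zero_of_eq_intCast {x : R} {n : ℕ} (a : ℤ) (hx : x = a) (h₀ : a ≤ 0)
    (h : -a < n) : risingF x n = 0 := by
  rw [← neg_neg x, risingF_neg, fallingF_eq_zero_of_eq_intCast (-a) (by simp [hx]) (by omega) h,
    mul_zero]

variable [Algebra ℚ R] [Algebra ℚ S]

theorem map_chooseF [AlgHomClass F ℚ R S] (φ : F) (x : R) (n : ℕ) :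
    φ (chooseF x n) = chooseF (φ x) n := by
  rw [chooseF, chooseF, map_mul, AlgHomClass.commutes, map_fallingF]

theorem chooseF_natCast (a n : ℕ) : chooseF (a : R) n = a.choose n := by
  rw [chooseF, fallingF_natCast, Nat.descFactorial_eq_factorial_mul_choose, Nat.cast_mul,
    ← mul_assoc, ← map_natCast (algebraMap ℚ R) n.factorial, ← map_mul,
    inv_mul_cancel₀ (by exact_mod_cast n.factorial_ne_zero), map_one, one_mul]

theorem chooseF_neg_one (n : ℕ) : chooseF (-1 : R) n = (-1) ^ n := by
  rw [chooseF, fallingF_neg_one, mul_left_comm, ← map_natCast (algebraMap ℚ R) n.factorial,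
    ← map_mul, inv_mul_cancel₀ (by exact_mod_cast n.factorial_ne_zero), map_one, mul_one]

theorem chooseF_eq_zero_of_eq_intCast {x : R} {n : ℕ} (a : ℤ) (hx : x = a) (h₀ : 0 ≤ a)
    (h : a < n) : chooseF x n = 0 := by
  rw [chooseF, fallingF_eq_zero_of_eq_intCast a hx h₀ h, mul_zero]

end Values

section Degree

open Polynomial

variable {R : Type*} [CommRing R]

theorem natDegree_fallingF_le {p : R[X]} {d : ℕ} (hp : p.natDegree ≤ d) (n : ℕ) :
    (fallingF p n).natDegree ≤ n * d :=
  (natDegree_prod_le _ _).trans <| (sum_le_sum (g := fun _ => d) fun i _ =>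
    (natDegree_sub_le_of_le hp (natDegree_natCast i).le).trans (by simp)).trans (by simp)

theorem natDegree_risingF_le {p : R[X]} {d : ℕ} (hp : p.natDegree ≤ d) (n : ℕ) :
    (risingF p n).natDegree ≤ n * d :=
  (natDegree_prod_le _ _).trans <| (sum_le_sum (g := fun _ => d) fun i _ =>
    (natDegree_add_le_of_le hp (natDegree_natCast i).le).trans (by simp)).trans (by simp)

variable [Algebra ℚ R]

theorem natDegree_chooseF_le {p : R[X]} {d : ℕ} (hp : p.natDegree ≤ d) (n : ℕ) :
    (chooseF p n).natDegree ≤ n * d := by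
  rw [chooseF, Polynomial.algebraMap_apply]
  exact (natDegree_C_mul_le _ _).trans (natDegree_fallingF_le hp n)

theorem natDegree_sub_algebraMap (p : R[X]) (c : ℚ) :
    (p - algebraMap ℚ R[X] c).natDegree = p.natDegree := by
  rw [Polynomial.algebraMap_apply, natDegree_sub_C]

end Degree

section Logopedia

variable {R S : Type*} [CommRing R] [Algebra ℚ R] [CommRing S] [Algebra ℚ S]

noncomputable def logopediaTerm₁ (s i j : ℕ) (v k : R) : R :=
  algebraMap ℚ R ((-1 : ℚ) ^ (i + j) * ((j - i - 1).factorial : ℚ)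
      / (((s - i - 1).factorial : ℚ) * ((j - 1).factorial : ℚ)))
    * chooseF (k - algebraMap ℚ R ((j : ℚ) + 1)) (s - j - 1)
    * chooseF (k - algebraMap ℚ R ((i : ℚ) + 1)) (j - i - 1)
    * chooseF (v - algebraMap ℚ R (s : ℚ)) i
    * risingF (v - algebraMap ℚ R (2 * (s : ℚ) - 1)) (s - i - 1)
    * fallingF (k - algebraMap ℚ R 1) i

noncomputable def logopediaTerm₂ (s i j : ℕ) (v k : R) : R :=
  algebraMap ℚ R ((-1 : ℚ) ^ (i + j) * ((i - j).factorial : ℚ)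
      / ((i.factorial : ℚ) * ((s - j - 1).factorial : ℚ)))
    * chooseF (k - algebraMap ℚ R ((j : ℚ) + 1)) (i - j)
    * chooseF (k - algebraMap ℚ R 1) (j - 1)
    * chooseF (v - algebraMap ℚ R ((s : ℚ) + (i : ℚ) + 1)) (s - i - 1)
    * fallingF (v - algebraMap ℚ R (s : ℚ)) i
    * risingF (k - algebraMap ℚ R ((s : ℚ) - 1)) (s - i - 1)

noncomputable def logopediaSum (s : ℕ) (v k : R) : R :=
  (∑ i ∈ range s, ∑ j ∈ Icc (i + 1) (s - 1), logopediaTerm₁ s i j v k)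
    + ∑ i ∈ range s, ∑ j ∈ Icc 1 i, logopediaTerm₂ s i j v k

theorem map_logopediaSum (φ : R →ₐ[ℚ] S) (s : ℕ) (v k : R) :
    φ (logopediaSum s v k) = logopediaSum s (φ v) (φ k) := by
  simp only [logopediaSum, logopediaTerm₁, logopediaTerm₂, map_add φ, map_sum φ, map_mul φ,
    map_sub φ, AlgHom.commutes, map_chooseF, map_fallingF, map_risingF]

open Polynomial in
theorem natDegree_logopediaSum_le (s : ℕ) {v k : R[X]} {dv dk : ℕ} (hv : v.natDegree ≤ dv)
    (hk : k.natDegree ≤ dk) :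
    (logopediaSum s v k).natDegree ≤ (s - 1) * dv + (s - 2) * dk := by
  have hc (c : ℚ) : (algebraMap ℚ R[X] c).natDegree ≤ 0 := by
    rw [Polynomial.algebraMap_apply, natDegree_C]
  have hv' (c : ℚ) := (natDegree_sub_algebraMap v c).trans_le hv
  have hk' (c : ℚ) := (natDegree_sub_algebraMap k c).trans_le hk
  refine natDegree_add_le_of_degree_le
    (natDegree_sum_le_of_forall_le _ _ fun i hi => natDegree_sum_le_of_forall_le _ _ fun j hj => ?_)
    (natDegree_sum_le_of_forall_le _ _ fun i hi => natDegree_sum_le_of_forall_le _ _ fun j hj => ?_)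
  all_goals simp only [mem_range, mem_Icc] at hi hj
  · refine (natDegree_mul_le_of_le (natDegree_mul_le_of_le (natDegree_mul_le_of_le
      (natDegree_mul_le_of_le (natDegree_mul_le_of_le (hc _)
        (natDegree_chooseF_le (hk' _) _)) (natDegree_chooseF_le (hk' _) _))
      (natDegree_chooseF_le (hv' _) _)) (natDegree_risingF_le (hv' _) _))
      (natDegree_fallingF_le (hk' _) _)).trans_eq ?_
    calc _ = ((s - j - 1) + (j - i - 1) + i) * dk + (i + (s - i - 1)) * dv := by ring
      _ = _ := by rw [show s - j - 1 + (j - i - 1) + i = s - 2 by omega,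
        show i + (s - i - 1) = s - 1 by omega]; ring
  · refine (natDegree_mul_le_of_le (natDegree_mul_le_of_le (natDegree_mul_le_of_le
      (natDegree_mul_le_of_le (natDegree_mul_le_of_le (hc _)
        (natDegree_chooseF_le (hk' _) _)) (natDegree_chooseF_le (hk' _) _))
      (natDegree_chooseF_le (hv' _) _)) (natDegree_fallingF_le (hv' _) _))
      (natDegree_risingF_le (hk' _) _)).trans_eq ?_
    calc _ = ((i - j) + (j - 1) + (s - i - 1)) * dk + ((s - i - 1) + i) * dv := by ring
      _ = _ := by rw [show i - j + (j - 1) + (s - i - 1) = s - 2 by omega,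
        show s - i - 1 + i = s - 1 by omega]; ring

end Logopedia

section Evaluation

variable {s m t i j : ℕ}

theorem logopediaTerm₁_natCast (hm : m < s) (ht₀ : 0 < t) (hts : t < s) (hij : i < j)
    (hjs : j < s) :
    logopediaTerm₁ s i j ((s : ℚ) + m) t = if i = m ∧ j = t then 1 else 0 := by
  simp only [logopediaTerm₁, Algebra.algebraMap_self, RingHom.id_apply]
  split_ifs with h
  · obtain ⟨rfl, rfl⟩ := h
    rw [show (j : ℚ) - (j + 1) = -1 by ring, show (s : ℚ) + i - s = i by ring,
      show (j : ℚ) - (i + 1) = ((j - i - 1 : ℕ) : ℚ) by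
        rw [Nat.sub_sub, Nat.cast_sub (by omega)]; push_cast; ring,
      show (s : ℚ) + i - (2 * s - 1) = -((s - i - 1 : ℕ) : ℚ) by
        rw [Nat.sub_sub, Nat.cast_sub (by omega)]; push_cast; ring,
      show (j : ℚ) - 1 = ((j - 1 : ℕ) : ℚ) by rw [Nat.cast_sub (by omega)]; push_cast; ring,
      chooseF_neg_one, chooseF_natCast, chooseF_natCast, Nat.choose_self, Nat.choose_self,
      risingF_neg, fallingF_natCast, fallingF_natCast, Nat.descFactorial_self]
    have hfact : ((j - i - 1).factorial : ℚ) * (j - 1).descFactorial i = (j - 1).factorial := by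
      rw [show j - i - 1 = j - 1 - i by omega]
      exact_mod_cast Nat.factorial_mul_descFactorial (by omega)
    have hsign : (-1 : ℚ) ^ (i + j) * (-1) ^ (s - j - 1) * (-1) ^ (s - i - 1) = 1 := by
      rw [← pow_add, ← pow_add]
      exact Even.neg_one_pow ⟨s - 1, by omega⟩
    field_simp
    linear_combination ((j - i - 1).factorial * (j - 1).descFactorial i : ℚ) * hsign + hfact
  · rcases lt_trichotomy i m with him | rfl | him
    · have : risingF ((s : ℚ) + m - (2 * s - 1)) (s - i - 1) = 0 :=
        risingF_eq_zero_of_eq_intCast (m + 1 - s) (by push_cast; ring) (by omega) (by omega)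
      simp only [this, mul_zero, zero_mul]
    · rcases lt_or_gt_of_ne (fun hjt => h ⟨rfl, hjt⟩) with hjt | hjt
      · have : chooseF ((t : ℚ) - (j + 1)) (s - j - 1) = 0 :=
          chooseF_eq_zero_of_eq_intCast (t - j - 1) (by push_cast; ring) (by omega) (by omega)
        simp only [this, mul_zero, zero_mul]
      · rcases lt_or_ge i t with hit | hti
        · have : chooseF ((t : ℚ) - (i + 1)) (j - i - 1) = 0 :=
            chooseF_eq_zero_of_eq_intCast (t - i - 1) (by push_cast; ring) (by omega) (by omega)
          simp only [this, mul_zero, zero_mul]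
        · have : fallingF ((t : ℚ) - 1) i = 0 :=
            fallingF_eq_zero_of_eq_intCast (t - 1) (by push_cast; ring) (by omega) (by omega)
          simp only [this, mul_zero]
    · have : chooseF ((s : ℚ) + m - s) i = 0 :=
        chooseF_eq_zero_of_eq_intCast m (by push_cast; ring) (by omega) (by omega)
      simp only [this, mul_zero, zero_mul]

theorem logopediaTerm₂_natCast (hm : m < s) (ht₀ : 0 < t) (hts : t < s) (hj : 0 < j)
    (hji : j ≤ i) (his : i < s) :
    logopediaTerm₂ s i j ((s : ℚ) + m) t = if i = m ∧ j = t then 1 else 0 := by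
  simp only [logopediaTerm₂, Algebra.algebraMap_self, RingHom.id_apply]
  split_ifs with h
  · obtain ⟨rfl, rfl⟩ := h
    rw [show (j : ℚ) - (j + 1) = -1 by ring, show (s : ℚ) + i - (s + i + 1) = -1 by ring,
      show (s : ℚ) + i - s = i by ring,
      show (j : ℚ) - 1 = ((j - 1 : ℕ) : ℚ) by rw [Nat.cast_sub (by omega)]; push_cast; ring,
      show (j : ℚ) - (s - 1) = -((s - j - 1 : ℕ) : ℚ) by
        rw [Nat.sub_sub, Nat.cast_sub (by omega)]; push_cast; ring,
      chooseF_neg_one, chooseF_neg_one, chooseF_natCast, Nat.choose_self,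
      fallingF_natCast, Nat.descFactorial_self, risingF_neg, fallingF_natCast]
    have hfact : ((i - j).factorial : ℚ) * (s - j - 1).descFactorial (s - i - 1)
        = (s - j - 1).factorial := by
      rw [show i - j = s - j - 1 - (s - i - 1) by omega]
      exact_mod_cast Nat.factorial_mul_descFactorial (by omega)
    have hsign : (-1 : ℚ) ^ (i + j) * (-1) ^ (i - j) * (-1) ^ (s - i - 1) * (-1) ^ (s - i - 1)
        = 1 := by
      rw [← pow_add, ← pow_add, ← pow_add]
      exact Even.neg_one_pow ⟨s - 1, by omega⟩
    field_simp
    linear_combination ((i - j).factorial * (s - j - 1).descFactorial (s - i - 1) : ℚ) * hsign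
      + hfact
  · rcases lt_trichotomy i m with him | rfl | him
    · have : chooseF ((s : ℚ) + m - (s + i + 1)) (s - i - 1) = 0 :=
        chooseF_eq_zero_of_eq_intCast (m - i - 1) (by push_cast; ring) (by omega) (by omega)
      simp only [this, mul_zero, zero_mul]
    · rcases lt_or_ge i t with hit | hti
      · have : risingF ((t : ℚ) - (s - 1)) (s - i - 1) = 0 :=
          risingF_eq_zero_of_eq_intCast (t + 1 - s) (by push_cast; ring) (by omega) (by omega)
        simp only [this, mul_zero]
      · rcases lt_or_gt_of_ne (fun hjt => h ⟨rfl, hjt⟩) with hjt | hjt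
        · have : chooseF ((t : ℚ) - (j + 1)) (i - j) = 0 :=
            chooseF_eq_zero_of_eq_intCast (t - j - 1) (by push_cast; ring) (by omega) (by omega)
          simp only [this, mul_zero, zero_mul]
        · have : chooseF ((t : ℚ) - 1) (j - 1) = 0 :=
            chooseF_eq_zero_of_eq_intCast (t - 1) (by push_cast; ring) (by omega) (by omega)
          simp only [this, mul_zero, zero_mul]
    · have : fallingF ((s : ℚ) + m - s) i = 0 :=
        fallingF_eq_zero_of_eq_intCast m (by push_cast; ring) (by omega) (by omega)
      simp only [this, mul_zero, zero_mul]

theorem logopediaSum_natCast (hm : m < s) (ht₀ : 0 < t) (hts : t < s) :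
    logopediaSum s ((s : ℚ) + m) t = 1 := by
  rw [logopediaSum,
    sum_congr rfl fun i hi => sum_congr rfl fun j hj => logopediaTerm₁_natCast hm ht₀ hts
      (by simp only [mem_Icc] at hj; omega) (by simp only [mem_Icc] at hj; omega),
    sum_congr rfl fun i hi => sum_congr rfl fun j hj => logopediaTerm₂_natCast hm ht₀ hts
      (by simp only [mem_Icc] at hj; omega) (mem_Icc.1 hj).2 (mem_range.1 hi)]
  simp only [ite_and, sum_ite_irrel, sum_const_zero, sum_ite_eq', mem_Icc, mem_range, hm, if_true]
  split_ifs <;> first | omega | norm_num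

end Evaluation

section Interpolation

open Polynomial

theorem eval_logopediaSum (s : ℕ) (v k : ℚ[X]) (x : ℚ) :
    (logopediaSum s v k).eval x = logopediaSum s (v.eval x) (k.eval x) := by
  simpa only [Polynomial.coe_aeval_eq_eval] using map_logopediaSum (aeval x) s v k

theorem logopediaSum_natCast_left {s m : ℕ} (hs : 2 ≤ s) (hm : m < s) (k : ℚ) :
    logopediaSum s ((s : ℚ) + m) k = 1 := by
  have hdeg :=
    natDegree_logopediaSum_le s (natDegree_C ((s : ℚ) + m)).le (natDegree_X_le (R := ℚ))
  have hp : logopediaSum s (Polynomial.C ((s : ℚ) + m)) Polynomial.X = 1 :=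
    eq_of_natDegree_lt_card_of_eval_eq _ 1 (f := fun t : Fin (s - 1) => ((t + 1 : ℕ) : ℚ))
      (fun a b h => Fin.ext (by simpa using h))
      (fun t => by
        rw [eval_logopediaSum, Polynomial.eval_C, Polynomial.eval_X, eval_one]
        exact logopediaSum_natCast hm (by omega) (by omega))
      (by rw [natDegree_one, Nat.max_zero, Fintype.card_fin]; omega)
  have h := congrArg (Polynomial.eval k) hp
  rwa [eval_logopediaSum, Polynomial.eval_C, Polynomial.eval_X, eval_one] at h

theorem logopediaSum_rat {s : ℕ} (hs : 2 ≤ s) (v k : ℚ) : logopediaSum s v k = 1 := by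
  have hdeg := natDegree_logopediaSum_le s (natDegree_X_le (R := ℚ)) (natDegree_C k).le
  have hp : logopediaSum s Polynomial.X (Polynomial.C k) = 1 :=
    eq_of_natDegree_lt_card_of_eval_eq _ 1 (f := fun m : Fin s => (s : ℚ) + (m : ℕ))
      (fun a b h => Fin.ext (by simpa using h))
      (fun m => by
        rw [eval_logopediaSum, Polynomial.eval_C, Polynomial.eval_X, eval_one]
        exact logopediaSum_natCast_left hs m.2 k)
      (by rw [natDegree_one, Nat.max_zero, Fintype.card_fin]; omega)
  have h := congrArg (Polynomial.eval v) hp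
  rwa [eval_logopediaSum, Polynomial.eval_C, Polynomial.eval_X, eval_one] at h

end Interpolation

/-- Here `v = X 0` and `k = X 1`. -/
theorem logopedia_identity (s : ℕ) (hs : 2 ≤ s) :
    (1 : MvPolynomial (Fin 2) ℚ) =
      (∑ i ∈ Finset.range s,
        (∑ j ∈ Finset.Icc (i + 1) (s - 1),
            algebraMap ℚ (MvPolynomial (Fin 2) ℚ)
                ((-1 : ℚ) ^ (i + j) * ((j - i - 1).factorial : ℚ)
                  / (((s - i - 1).factorial : ℚ) * ((j - 1).factorial : ℚ)))
              * chooseF (X 1 - MvPolynomial.C ((j : ℚ) + 1)) (s - j - 1)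
              * chooseF (X 1 - MvPolynomial.C ((i : ℚ) + 1)) (j - i - 1)
              * chooseF (X 0 - MvPolynomial.C (s : ℚ)) i)
          * risingF (X 0 - MvPolynomial.C (2 * (s : ℚ) - 1)) (s - i - 1)
          * fallingF (X 1 - MvPolynomial.C 1) i)
      + (∑ i ∈ Finset.range s,
        (∑ j ∈ Finset.Icc 1 i,
            algebraMap ℚ (MvPolynomial (Fin 2) ℚ)
                ((-1 : ℚ) ^ (i + j) * ((i - j).factorial : ℚ)
                  / ((i.factorial : ℚ) * ((s - j - 1).factorial : ℚ)))
              * chooseF (X 1 - MvPolynomial.C ((j : ℚ) + 1)) (i - j)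
              * chooseF (X 1 - MvPolynomial.C 1) (j - 1)
              * chooseF (X 0 - MvPolynomial.C ((s : ℚ) + (i : ℚ) + 1)) (s - i - 1))
          * fallingF (X 0 - MvPolynomial.C (s : ℚ)) i
          * risingF (X 1 - MvPolynomial.C ((s : ℚ) - 1)) (s - i - 1)) := by
  have key : logopediaSum s (X 0 : MvPolynomial (Fin 2) ℚ) (X 1) = 1 :=
    MvPolynomial.funext fun x => by
      have h := map_logopediaSum (aeval x) s (X 0) (X 1)
      rw [map_one]
      rwa [aeval_X, aeval_X, logopediaSum_rat hs, aeval_eq_eval] at h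
  simp only [logopediaSum, logopediaTerm₁, logopediaTerm₂] at key
  simp only [← MvPolynomial.algebraMap_eq, sum_mul]
  exact key.symm
end

section
/- Lower bound for the prime-gap threshold: define ρ_s as the smallest positive integer n such that the interval (n, n+s-1] contains no primes. Assume (Dusart's theorem) that for every real x ≥ 468,991,632 there exists a prime in (x, x + x/(5000 (ln x)^2)], and assume ρ_{288} = 1,294,268,491. Then for every s ≥ 288, ρ_s > 5000·s·(14.6 + ln s)^2, and in particular ρ_s > 2,000,000·s. -/
open Real

/-- `ρ s` is the smallest positive integer `n` such that the interval `(n, n+s-1]`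
contains no primes. -/
noncomputable def rho (s : ℕ) : ℕ :=
  sInf {n : ℕ | 0 < n ∧ ∀ p : ℕ, n < p → p ≤ n + s - 1 → ¬ p.Prime}

open scoped Nat

/-!
Put `n = ρ_s ≥ ρ_288` and `L = log n`. Dusart's bound yields a prime in `(n, n + n/(5000 L²)]`,
and the first prime after `n` is at least `n + s`, so `5000 s L² ≤ n`. Taking logarithms,
`L ≥ log 5000 + log s + 2 log L`, and since `L > 20.97` this exceeds `14.6 + log s`. Hence
`n ≥ 5000 s L² > 5000 s (14.6 + log s)²`, and `14.6 + log s > 14.6 + log 288 > 20` gives the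
bound `2 000 000 s`.
-/

lemma div_lt_log_of_pow_lt {num den : ℕ} {b : ℝ} (hden : den ≠ 0) (hb : 0 < b)
    (h : (2.7182818286 : ℝ) ^ num < b ^ den) :
    (num : ℝ) / den < log b := by
  rw [lt_log_iff_exp_lt hb]
  refine lt_of_pow_lt_pow_left₀ den hb.le ?_
  calc exp ((num : ℝ) / den) ^ den = exp 1 ^ num := by
        rw [← exp_nat_mul, ← exp_nat_mul]; congr 1; field_simp
    _ ≤ (2.7182818286 : ℝ) ^ num := pow_le_pow_left₀ (exp_pos 1).le exp_one_lt_d9.le num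
    _ < b ^ den := h

lemma log_5000_gt : (8.516 : ℝ) < log 5000 := by
  have h := div_lt_log_of_pow_lt (num := 2129) (den := 250) (b := 5000) (by norm_num)
    (by norm_num) (by rw [show (2129 : ℕ) = 16 * 133 + 1 by norm_num, pow_succ, pow_mul]; norm_num)
  norm_num at h ⊢; linarith

lemma log_1294268491_gt : (20.97 : ℝ) < log 1294268491 := by
  have h := div_lt_log_of_pow_lt (num := 2097) (den := 100) (b := 1294268491) (by norm_num)
    (by norm_num) (by rw [show (2097 : ℕ) = 16 * 131 + 1 by norm_num, pow_succ, pow_mul]; norm_num)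
  norm_num at h ⊢; linarith

lemma log_20_97_gt : (213 / 70 : ℝ) < log 20.97 := by
  exact_mod_cast div_lt_log_of_pow_lt (num := 213) (den := 70) (b := 20.97) (by norm_num)
    (by norm_num) (by norm_num)

lemma log_288_gt : (5.4 : ℝ) < log 288 := by
  have h := div_lt_log_of_pow_lt (num := 27) (den := 5) (b := 288) (by norm_num) (by norm_num)
    (by norm_num)
  norm_num at h ⊢; linarith

lemma not_prime_of_factorial_lt_of_le (k p : ℕ) (hlt : k ! + 1 < p) (hle : p ≤ k ! + k) :
    ¬ p.Prime := by
  intro hp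
  have hd : p - k ! ∣ p := by
    have hdvd : p - k ! ∣ k ! := Nat.dvd_factorial (by omega) (by omega)
    simpa [Nat.add_sub_cancel' (by omega : k ! ≤ p)] using dvd_add hdvd (dvd_refl (p - k !))
  rcases hp.eq_one_or_self_of_dvd _ hd with h | h
  · omega
  · have := Nat.factorial_pos k
    omega

lemma rho_spec (s : ℕ) :
    0 < rho s ∧ ∀ p : ℕ, rho s < p → p ≤ rho s + s - 1 → ¬ p.Prime :=
  Nat.sInf_mem (s := {n : ℕ | 0 < n ∧ ∀ p : ℕ, n < p → p ≤ n + s - 1 → ¬ p.Prime})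
    ⟨s ! + 1, Nat.succ_pos _, fun p hlt _ => not_prime_of_factorial_lt_of_le s p hlt (by omega)⟩

lemma rho_mono : Monotone rho := fun s t hst =>
  Nat.sInf_le ⟨(rho_spec t).1, fun p hlt hle => (rho_spec t).2 p hlt (by omega)⟩

lemma rho_add_le_of_prime {s p : ℕ} (hp : p.Prime) (hlt : rho s < p) : rho s + s ≤ p := by
  by_contra! h
  exact (rho_spec s).2 p hlt (by omega) hp

lemma mul_sq_log_rho_le
    (dusart : ∀ x : ℝ, 468991632 ≤ x →
      ∃ p : ℕ, p.Prime ∧ (x : ℝ) < p ∧ (p : ℝ) ≤ x + x / (5000 * (log x) ^ 2))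
    {s : ℕ} (hρ : 468991632 ≤ rho s) :
    5000 * (s : ℝ) * log (rho s) ^ 2 ≤ rho s := by
  obtain ⟨p, hp, hlt, hle⟩ := dusart (rho s) (by exact_mod_cast hρ)
  have hgap : ((rho s + s : ℕ) : ℝ) ≤ p := by
    exact_mod_cast rho_add_le_of_prime hp (by exact_mod_cast hlt)
  have hlog : 0 < log (rho s) := log_pos (by exact_mod_cast (by omega : 1 < rho s))
  have hs' : (s : ℝ) ≤ rho s / (5000 * log (rho s) ^ 2) := by push_cast at hgap; linarith
  rw [le_div_iff₀ (by positivity)] at hs'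
  linarith

lemma add_log_lt_log_of_mul_sq_log_le {n s : ℝ} (hn : 1294268491 ≤ n) (hs : 0 < s)
    (h : 5000 * s * log n ^ 2 ≤ n) : 14.6 + log s < log n := by
  have hL : 20.97 < log n :=
    log_1294268491_gt.trans_le (log_le_log (by norm_num) hn)
  have hlogL : 213 / 70 < log (log n) :=
    log_20_97_gt.trans_le (log_le_log (by norm_num) hL.le)
  have hexpand : log (5000 * s * log n ^ 2) = log 5000 + log s + 2 * log (log n) := by
    rw [log_mul (by positivity) (by positivity), log_mul (by norm_num) hs.ne', log_pow]
    push_cast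
    ring
  have := log_le_log (by positivity) h
  linarith [log_5000_gt]

/-- Lower bound for `ρ_s` (Proposition, Section 5), assuming Dusart's prime gap
bound and the known value `ρ_288 = 1294268491`. -/
theorem rho_lower_bound
    (dusart : ∀ x : ℝ, 468991632 ≤ x →
      ∃ p : ℕ, p.Prime ∧ (x : ℝ) < p ∧ (p : ℝ) ≤ x + x / (5000 * (Real.log x) ^ 2))
    (h288 : rho 288 = 1294268491) :
    ∀ s : ℕ, 288 ≤ s →
      5000 * (s : ℝ) * (14.6 + Real.log s) ^ 2 < (rho s : ℝ) ∧
      2000000 * (s : ℝ) < (rho s : ℝ) := by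
  intro s hs
  have hρ : 1294268491 ≤ rho s := h288 ▸ rho_mono hs
  have hsR : (288 : ℝ) ≤ s := by exact_mod_cast hs
  have hlogs : 5.4 < log s := log_288_gt.trans_le (log_le_log (by norm_num) hsR)
  have hgap := mul_sq_log_rho_le dusart (s := s) (by omega)
  have hlt := add_log_lt_log_of_mul_sq_log_le (by exact_mod_cast hρ) (by positivity) hgap
  have hsq : (14.6 + log s) ^ 2 < log (rho s) ^ 2 := by gcongr
  have hs0 : 0 < (s : ℝ) := by positivity
  have hbound : 5000 * (s : ℝ) * (14.6 + log s) ^ 2 < rho s := by nlinarith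
  have h400 : (400 : ℝ) ≤ (14.6 + log s) ^ 2 := by nlinarith
  exact ⟨hbound, lt_of_le_of_lt (by nlinarith) hbound⟩
end
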